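/- (Theorem 8: best achievable false-negative exponent in the Neyman–Pearson setting.) Let A be a nonempty finite set, d : A × A → ℝ nonnegative with d(a,a) = 0 for all a, and let P_0, P_1 be strictly positive PMFs on A and Δ_0, Δ_1 ≥ 0. For λ ≥ 0 define f(λ) = min over PMFs P_Y on A with D̃_{Δ_0}(P_Y, P_0) ≤ λ of D̃_{Δ_1}(P_Y, P_1). Then f(λ) → f(0) as λ → 0 from the right, and f(0) = min over PMFs Q on A × A with first marginal equal to P_0 and ∑_{(a,b)} Q(a,b)·d(a,b) ≤ Δ_0 of D̃_{Δ_1}(Q_Y, P_1), where Q_Y denotes the second marginal of Q. -/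

import Mathlib

open scoped Classical
open Finset Filter

noncomputable section

/-- A probability mass function on a finite alphabet, as a real-valued function. -/
def IsPMF {A : Type} [Fintype A] (P : A → ℝ) : Prop :=
  (∀ a, 0 ≤ P a) ∧ ∑ a, P a = 1

/-- Kullback--Leibler divergence `D(Q‖P) = ∑_{a : Q a > 0} Q a · ln (Q a / P a)`. -/
def klDiv {A : Type} [Fintype A] (Q P : A → ℝ) : ℝ :=
  ∑ a, if 0 < Q a then Q a * Real.log (Q a / P a) else 0

/-- First marginal of a joint PMF on `A × A`. -/
def margX {A : Type} [Fintype A] (Q : A × A → ℝ) : A → ℝ := fun a => ∑ b, Q (a, b)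

/-- Second marginal of a joint PMF on `A × A`. -/
def margY {A : Type} [Fintype A] (Q : A × A → ℝ) : A → ℝ := fun b => ∑ a, Q (a, b)

/-- Expected distortion of a joint PMF. -/
def expDist {A : Type} [Fintype A] (d : A → A → ℝ) (Q : A × A → ℝ) : ℝ :=
  ∑ q : A × A, Q q * d q.1 q.2

/-- Generalized divergence `D̃_Δ(P_Y, P)`: minimum of `D(Q_X‖P)` over joint PMFs `Q`
with second marginal `P_Y` and expected distortion at most `Δ`. -/
def Dtilde {A : Type} [Fintype A] (d : A → A → ℝ) (Δ : ℝ) (PY P : A → ℝ) : ℝ :=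
  sInf {v | ∃ Q : A × A → ℝ,
    IsPMF Q ∧ margY Q = PY ∧ expDist d Q ≤ Δ ∧ v = klDiv (margX Q) P}

/-- Earth mover distance between two PMFs. -/
def EMD {A : Type} [Fintype A] (d : A → A → ℝ) (P P' : A → ℝ) : ℝ :=
  sInf {v | ∃ R : A × A → ℝ,
    IsPMF R ∧ margX R = P ∧ margY R = P' ∧ v = expDist d R}

/-- Memoryless (product) probability of a sequence. -/
def seqProb {A : Type} {n : ℕ} (P : A → ℝ) (x : Fin n → A) : ℝ := ∏ i, P (x i)

/-- Additive extension of a per-letter distortion to sequences. -/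
def dSeq {A : Type} {n : ℕ} (d : A → A → ℝ) (x y : Fin n → A) : ℝ := ∑ i, d (x i) (y i)

/-- Empirical PMF (type) of a sequence. -/
def empP {A : Type} [Fintype A] [DecidableEq A] {n : ℕ} (x : Fin n → A) : A → ℝ :=
  fun a => ((univ.filter fun i => x i = a).card : ℝ) / (n : ℝ)

/-- Empirical entropy of a sequence. -/
def empEnt {A : Type} [Fintype A] [DecidableEq A] {n : ℕ} (y : Fin n → A) : ℝ :=
  -∑ a, if 0 < empP y a then empP y a * Real.log (empP y a) else 0

/-- Conditional type class `T(y|x)`. -/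
def condTypeClass {A : Type} [Fintype A] [DecidableEq A] {n : ℕ} (x y : Fin n → A) :
    Finset (Fin n → A) :=
  univ.filter fun y' => ∀ a b : A,
    (univ.filter fun i => x i = a ∧ y' i = b).card
      = (univ.filter fun i => x i = a ∧ y i = b).card

/-- Number of distinct conditional type classes `T(y|x)` arising from `y` with
`dn x y ≤ n·Δ`. -/
def numCondTypes {A : Type} [Fintype A] [DecidableEq A] {n : ℕ}
    (dn : (Fin n → A) → (Fin n → A) → ℝ) (Δ : ℝ) (x : Fin n → A) : ℕ :=
  ((univ.filter fun y => dn x y ≤ (n : ℝ) * Δ).image fun y => condTypeClass x y).card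

/-- The optimal attack channel `A*_Δ(y|x) = c_n(x)/|T(y|x)|` on admissible `y`,
and `0` otherwise; here `c_n(x)` is the reciprocal of the number of admissible
conditional type classes. -/
def Astar {A : Type} [Fintype A] [DecidableEq A] {n : ℕ}
    (dn : (Fin n → A) → (Fin n → A) → ℝ) (Δ : ℝ) (x y : Fin n → A) : ℝ :=
  if dn x y ≤ (n : ℝ) * Δ then
    ((numCondTypes dn Δ x : ℝ))⁻¹ / ((condTypeClass x y).card : ℝ)
  else 0

/-- A channel on `A^n`: `W x y` is the conditional probability of output `y` given input `x`. -/
def IsChannel {A : Type} [Fintype A] {n : ℕ}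
    (W : (Fin n → A) → (Fin n → A) → ℝ) : Prop :=
  (∀ x y, 0 ≤ W x y) ∧ ∀ x, ∑ y, W x y = 1

/-- The class `C_Δ` of admissible channels: those assigning zero probability to any
`y` with `dn x y > n·Δ`. -/
def InC {A : Type} [Fintype A] {n : ℕ}
    (dn : (Fin n → A) → (Fin n → A) → ℝ) (Δ : ℝ)
    (W : (Fin n → A) → (Fin n → A) → ℝ) : Prop :=
  IsChannel W ∧ ∀ x y, (n : ℝ) * Δ < dn x y → W x y = 0

/-- False positive probability: `Φ y` is the probability of deciding `H₁` given `y`. -/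
def PFP {A : Type} [Fintype A] {n : ℕ} (P0 : A → ℝ) (Φ : (Fin n → A) → ℝ)
    (A0 : (Fin n → A) → (Fin n → A) → ℝ) : ℝ :=
  ∑ x, ∑ y, seqProb P0 x * A0 x y * Φ y

/-- False negative probability. -/
def PFN {A : Type} [Fintype A] {n : ℕ} (P1 : A → ℝ) (Φ : (Fin n → A) → ℝ)
    (A1 : (Fin n → A) → (Fin n → A) → ℝ) : ℝ :=
  ∑ x, ∑ y, seqProb P1 x * A1 x y * (1 - Φ y)

/-- Sequence-level generalized divergence
`D̃ⁿ_Δ(y,P) = min_{x : d(x,y) ≤ nΔ} D(P̂_x‖P)`. -/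
def DtildeN {A : Type} [Fintype A] [DecidableEq A] {n : ℕ} (d : A → A → ℝ) (Δ : ℝ)
    (y : Fin n → A) (P : A → ℝ) : ℝ :=
  sInf {v | ∃ x : Fin n → A, dSeq d x y ≤ (n : ℝ) * Δ ∧ v = klDiv (empP x) P}

/-
Once the inner minimum in `D̃` is attained, the sublevel set `{P_Y | D̃_Δ(P_Y, P) ≤ c}` is the image
under the second marginal of the compact set of couplings with distortion at most `Δ` and
`D(Q_X‖P) ≤ c`; hence it is compact. So `f(λ)` minimizes the lower semicontinuous `D̃_{Δ₁}(·, P₁)`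
over compact sets that shrink to `{D̃_{Δ₀}(·, P₀) ≤ 0}` as `λ ↓ 0`, and a nested-compact-sets
argument gives right continuity at `0`. Since `D(Q_X‖P₀) = 0` forces `Q_X = P₀`, the same image
description at `c = 0` identifies `f(0)`.
-/

open Topology

section ValueFunction

variable {X : Type*} [TopologicalSpace X] {p : X → Prop} {F g : X → ℝ}

/- If the value `sInf (g '' {p ∧ F ≤ δ})` stayed `ε` below its value at `δ = 0`, the compact sets
`{p ∧ F ≤ 1/(n+1) ∧ g ≤ V₀ - ε/2}` would be nonempty and nested, and a point of their intersection
would be feasible at `δ = 0` with value below `V₀`. -/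
lemma exists_pos_sInf_image_sublevel_gt (hp : IsCompact {x | p x})
    (hF : ∀ c, IsClosed {x | p x ∧ F x ≤ c}) (hg : ∀ c, IsClosed {x | p x ∧ g x ≤ c})
    (hgb : BddBelow (g '' {x | p x})) (hne : ∃ x, p x ∧ F x ≤ 0) {ε : ℝ} (hε : 0 < ε) :
    ∃ δ > 0, sInf (g '' {x | p x ∧ F x ≤ 0}) - ε < sInf (g '' {x | p x ∧ F x ≤ δ}) := by
  set V₀ := sInf (g '' {x | p x ∧ F x ≤ 0})
  by_contra! hlow
  set T : ℕ → Set X := fun n =>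
    {x | p x ∧ F x ≤ 1 / ((n : ℝ) + 1)} ∩ {x | p x ∧ g x ≤ V₀ - ε / 2}
  have hT_closed : ∀ n, IsClosed (T n) := fun n => (hF _).inter (hg _)
  have hT_anti : ∀ n, T (n + 1) ⊆ T n := by
    refine fun n x ⟨⟨hx, hFx⟩, hgx⟩ => ⟨⟨hx, hFx.trans ?_⟩, hgx⟩
    gcongr
    simp
  have hT_ne : ∀ n, (T n).Nonempty := by
    intro n
    obtain ⟨x₀, hx₀, hFx₀⟩ := hne
    have hδ : (0 : ℝ) < 1 / ((n : ℝ) + 1) := by positivity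
    have hlt : sInf (g '' {x | p x ∧ F x ≤ 1 / ((n : ℝ) + 1)}) < V₀ - ε / 2 := by
      linarith [hlow _ hδ]
    have hne' : (g '' {x | p x ∧ F x ≤ 1 / ((n : ℝ) + 1)}).Nonempty :=
      ⟨g x₀, x₀, ⟨hx₀, hFx₀.trans hδ.le⟩, rfl⟩
    obtain ⟨_, ⟨x, ⟨hx, hFx⟩, rfl⟩, hgx⟩ := exists_lt_of_csInf_lt hne' hlt
    exact ⟨x, show x ∈ T n from ⟨⟨hx, hFx⟩, hx, hgx.le⟩⟩
  have hT_compact : IsCompact (T 0) :=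
    hp.of_isClosed_subset (hT_closed 0) fun x hx => hx.1.1
  obtain ⟨x, hx⟩ := hT_compact.nonempty_iInter_of_sequence_nonempty_isCompact_isClosed
    T hT_anti hT_ne hT_closed
  have hxT : ∀ n, x ∈ T n := Set.mem_iInter.mp hx
  have hFx : F x ≤ 0 := by
    refine le_of_forall_pos_le_add fun η hη => ?_
    obtain ⟨n, hn⟩ := exists_nat_one_div_lt hη
    linarith [(hxT n).1.2]
  have hV₀ : V₀ ≤ g x :=
    csInf_le (hgb.mono (Set.image_mono fun y hy => hy.1)) ⟨x, ⟨(hxT 0).1.1, hFx⟩, rfl⟩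
  linarith [(hxT 0).2.2]

lemma tendsto_sInf_image_sublevel (hp : IsCompact {x | p x})
    (hF : ∀ c, IsClosed {x | p x ∧ F x ≤ c}) (hg : ∀ c, IsClosed {x | p x ∧ g x ≤ c})
    (hgb : BddBelow (g '' {x | p x})) (hne : ∃ x, p x ∧ F x ≤ 0) :
    Tendsto (fun t => sInf (g '' {x | p x ∧ F x ≤ t})) (𝓝[>] 0)
      (𝓝 (sInf (g '' {x | p x ∧ F x ≤ 0}))) := by
  obtain ⟨x₀, hx₀, hFx₀⟩ := hne
  have hanti : ∀ s t, 0 ≤ s → s ≤ t →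
      sInf (g '' {x | p x ∧ F x ≤ t}) ≤ sInf (g '' {x | p x ∧ F x ≤ s}) := fun s t hs hst =>
    csInf_le_csInf (hgb.mono (Set.image_mono fun y hy => hy.1))
      ⟨g x₀, x₀, ⟨hx₀, hFx₀.trans hs⟩, rfl⟩
      (Set.image_mono fun y hy => ⟨hy.1, hy.2.trans hst⟩)
  refine tendsto_order.2 ⟨fun a ha => ?_, fun b hb => ?_⟩
  · obtain ⟨δ, hδ, hgt⟩ :=
      exists_pos_sInf_image_sublevel_gt hp hF hg hgb ⟨x₀, hx₀, hFx₀⟩ (sub_pos.2 ha)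
    filter_upwards [Ioo_mem_nhdsGT hδ] with t ht
    linarith [hanti t δ ht.1.le ht.2.le]
  · filter_upwards [self_mem_nhdsWithin] with t (ht : 0 < t)
    exact (hanti 0 t le_rfl ht.le).trans_lt hb

end ValueFunction

section PMF

variable {A : Type} [Fintype A]

lemma isCompact_setOf_isPMF : IsCompact {P : A → ℝ | IsPMF P} :=
  isCompact_stdSimplex ℝ A

lemma continuous_margX : Continuous (margX (A := A)) := by
  unfold margX; fun_prop

lemma continuous_margY : Continuous (margY (A := A)) := by
  unfold margY; fun_prop

lemma continuous_expDist (d : A → A → ℝ) : Continuous (expDist d) := by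
  unfold expDist; fun_prop

lemma isPMF_margX {Q : A × A → ℝ} (hQ : IsPMF Q) : IsPMF (margX Q) :=
  ⟨fun a => sum_nonneg fun b _ => hQ.1 (a, b), by
    rw [← hQ.2, Fintype.sum_prod_type]; rfl⟩

lemma isPMF_margY {Q : A × A → ℝ} (hQ : IsPMF Q) : IsPMF (margY Q) :=
  ⟨fun b => sum_nonneg fun a _ => hQ.1 (a, b), by
    rw [← hQ.2, Fintype.sum_prod_type_right]; rfl⟩

end PMF

section KL

open InformationTheory (klFun klFun_apply klFun_nonneg klFun_eq_zero_iff klFun_one)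

variable {A : Type} [Fintype A] {Q P : A → ℝ}

/- `Q log (Q/P) = P klFun (Q/P) - P + Q`, and the two correction terms cancel after summing. -/
lemma klDiv_eq_sum_mul_klFun (hQ : IsPMF Q) (hP : IsPMF P) (hPpos : ∀ a, 0 < P a) :
    klDiv Q P = ∑ a, P a * klFun (Q a / P a) := by
  have hterm : ∀ a, (if 0 < Q a then Q a * Real.log (Q a / P a) else 0)
      = P a * klFun (Q a / P a) - P a + Q a := by
    intro a
    have hPa := (hPpos a).ne'
    rw [klFun_apply]
    split_ifs with hQa
    · field_simp
      ring
    · simp [le_antisymm (not_lt.mp hQa) (hQ.1 a)]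
  simp only [klDiv, hterm, sum_add_distrib, sum_sub_distrib, hP.2, hQ.2]
  ring

lemma klDiv_nonneg (hQ : IsPMF Q) (hP : IsPMF P) (hPpos : ∀ a, 0 < P a) : 0 ≤ klDiv Q P := by
  rw [klDiv_eq_sum_mul_klFun hQ hP hPpos]
  exact sum_nonneg fun a _ =>
    mul_nonneg (hPpos a).le (klFun_nonneg (div_nonneg (hQ.1 a) (hPpos a).le))

lemma klDiv_nonpos_iff (hQ : IsPMF Q) (hP : IsPMF P) (hPpos : ∀ a, 0 < P a) :
    klDiv Q P ≤ 0 ↔ Q = P := by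
  have hnonneg : ∀ a, 0 ≤ P a * klFun (Q a / P a) := fun a =>
    mul_nonneg (hPpos a).le (klFun_nonneg (div_nonneg (hQ.1 a) (hPpos a).le))
  rw [klDiv_eq_sum_mul_klFun hQ hP hPpos]
  constructor
  · intro hle
    have hzero := (sum_eq_zero_iff_of_nonneg fun a _ => hnonneg a).mp
      (le_antisymm hle (sum_nonneg fun a _ => hnonneg a))
    funext a
    have hkl : klFun (Q a / P a) = 0 :=
      (mul_eq_zero.mp (hzero a (mem_univ a))).resolve_left (hPpos a).ne'
    rw [klFun_eq_zero_iff (div_nonneg (hQ.1 a) (hPpos a).le), div_eq_one_iff_eq (hPpos a).ne']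
      at hkl
    exact hkl
  · rintro rfl
    simp [div_self (hPpos _).ne', klFun_one]

lemma continuous_klDiv_left (hPpos : ∀ a, 0 < P a) : Continuous fun Q : A → ℝ => klDiv Q P := by
  have hmul_log_div : ∀ a (x : ℝ),
      x * Real.log (x / P a) = x * Real.log x - x * Real.log (P a) := by
    intro a x
    rcases eq_or_ne x 0 with rfl | hx
    · simp
    · rw [Real.log_div hx (hPpos a).ne', mul_sub]
  -- Clipping at `0` turns the case split in `klDiv` into a composition of continuous maps.
  have hclip : (fun Q : A → ℝ => klDiv Q P)
      = fun Q => ∑ a, max (Q a) 0 * Real.log (max (Q a) 0 / P a) := by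
    funext Q
    refine sum_congr rfl fun a _ => ?_
    split_ifs with hQa
    · rw [max_eq_left hQa.le]
    · rw [max_eq_right (not_lt.mp hQa), zero_mul]
  rw [hclip]
  refine continuous_finsetSum _ fun a _ => ?_
  simp only [hmul_log_div]
  fun_prop

end KL

section Dtilde

variable {A : Type} [Fintype A] {d : A → A → ℝ} {Δ : ℝ} {PY P : A → ℝ}

def diagCoupling (PY : A → ℝ) : A × A → ℝ := fun q => if q.1 = q.2 then PY q.2 else 0

lemma isPMF_diagCoupling (hPY : IsPMF PY) : IsPMF (diagCoupling PY) := by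
  refine ⟨fun q => ?_, ?_⟩
  · unfold diagCoupling
    split_ifs
    exacts [hPY.1 _, le_rfl]
  · rw [← hPY.2, Fintype.sum_prod_type]
    simp [diagCoupling]

lemma margY_diagCoupling (PY : A → ℝ) : margY (diagCoupling PY) = PY := by
  funext b
  simp [margY, diagCoupling]

lemma margX_diagCoupling (PY : A → ℝ) : margX (diagCoupling PY) = PY := by
  funext a
  simp [margX, diagCoupling]

lemma expDist_diagCoupling (hdrefl : ∀ a, d a a = 0) (PY : A → ℝ) :
    expDist d (diagCoupling PY) = 0 :=
  sum_eq_zero fun q _ => by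
    unfold diagCoupling
    split_ifs with h
    · rw [h, hdrefl, mul_zero]
    · rw [zero_mul]

lemma Dtilde_le (hP : IsPMF P) (hPpos : ∀ a, 0 < P a) {Q : A × A → ℝ}
    (hQ : IsPMF Q) (hY : margY Q = PY) (hE : expDist d Q ≤ Δ) :
    Dtilde d Δ PY P ≤ klDiv (margX Q) P :=
  csInf_le ⟨0, by rintro _ ⟨Q', hQ', -, -, rfl⟩; exact klDiv_nonneg (isPMF_margX hQ') hP hPpos⟩
    ⟨Q, hQ, hY, hE, rfl⟩

lemma Dtilde_nonneg (hP : IsPMF P) (hPpos : ∀ a, 0 < P a) : 0 ≤ Dtilde d Δ PY P :=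
  Real.sInf_nonneg <| by
    rintro _ ⟨Q, hQ, -, -, rfl⟩
    exact klDiv_nonneg (isPMF_margX hQ) hP hPpos

lemma Dtilde_self (hdrefl : ∀ a, d a a = 0) (hΔ : 0 ≤ Δ) (hP : IsPMF P)
    (hPpos : ∀ a, 0 < P a) : Dtilde d Δ P P = 0 := by
  refine le_antisymm ?_ (Dtilde_nonneg hP hPpos)
  calc Dtilde d Δ P P ≤ klDiv (margX (diagCoupling P)) P :=
        Dtilde_le hP hPpos (isPMF_diagCoupling hP) (margY_diagCoupling P)
          ((expDist_diagCoupling hdrefl P).trans_le hΔ)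
    _ ≤ 0 := by rw [margX_diagCoupling]; exact (klDiv_nonpos_iff hP hP hPpos).2 rfl

lemma exists_coupling_klDiv_eq_Dtilde (hdrefl : ∀ a, d a a = 0) (hΔ : 0 ≤ Δ) (hPY : IsPMF PY)
    (hP : IsPMF P) (hPpos : ∀ a, 0 < P a) :
    ∃ Q : A × A → ℝ, IsPMF Q ∧ margY Q = PY ∧ expDist d Q ≤ Δ ∧
      klDiv (margX Q) P = Dtilde d Δ PY P := by
  set K : Set (A × A → ℝ) := {Q | IsPMF Q} ∩ {Q | margY Q = PY ∧ expDist d Q ≤ Δ}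
  have hK : IsCompact K := isCompact_setOf_isPMF.inter_right
    ((isClosed_eq continuous_margY continuous_const).inter
      (isClosed_le (continuous_expDist d) continuous_const))
  have hKne : K.Nonempty := ⟨diagCoupling PY, isPMF_diagCoupling hPY,
    margY_diagCoupling PY, (expDist_diagCoupling hdrefl PY).trans_le hΔ⟩
  obtain ⟨Q, ⟨hQ, hY, hE⟩, hmin⟩ :=
    hK.exists_isMinOn hKne ((continuous_klDiv_left hPpos).comp continuous_margX).continuousOn
  refine ⟨Q, hQ, hY, hE, le_antisymm ?_ (Dtilde_le hP hPpos hQ hY hE)⟩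
  refine le_csInf ⟨_, Q, hQ, hY, hE, rfl⟩ ?_
  rintro _ ⟨Q', hQ', hY', hE', rfl⟩
  exact hmin ⟨hQ', hY', hE'⟩

lemma setOf_Dtilde_le_eq_image (hdrefl : ∀ a, d a a = 0) (hΔ : 0 ≤ Δ) (hP : IsPMF P)
    (hPpos : ∀ a, 0 < P a) (c : ℝ) :
    {PY | IsPMF PY ∧ Dtilde d Δ PY P ≤ c}
      = margY '' {Q | IsPMF Q ∧ expDist d Q ≤ Δ ∧ klDiv (margX Q) P ≤ c} := by
  ext PY
  constructor
  · rintro ⟨hPY, hle⟩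
    obtain ⟨Q, hQ, hY, hE, hkl⟩ := exists_coupling_klDiv_eq_Dtilde hdrefl hΔ hPY hP hPpos
    exact ⟨Q, ⟨hQ, hE, hkl ▸ hle⟩, hY⟩
  · rintro ⟨Q, ⟨hQ, hE, hkl⟩, rfl⟩
    exact ⟨isPMF_margY hQ, (Dtilde_le hP hPpos hQ rfl hE).trans hkl⟩

lemma isClosed_setOf_Dtilde_le (hdrefl : ∀ a, d a a = 0) (hΔ : 0 ≤ Δ) (hP : IsPMF P)
    (hPpos : ∀ a, 0 < P a) (c : ℝ) : IsClosed {PY | IsPMF PY ∧ Dtilde d Δ PY P ≤ c} := by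
  rw [setOf_Dtilde_le_eq_image hdrefl hΔ hP hPpos c]
  refine (IsCompact.image ?_ continuous_margY).isClosed
  exact isCompact_setOf_isPMF.inter_right
    ((isClosed_le (continuous_expDist d) continuous_const).inter
      (isClosed_le ((continuous_klDiv_left hPpos).comp continuous_margX) continuous_const))

end Dtilde

theorem best_np_fn_exponent_general
    {A : Type} [Fintype A]
    (d : A → A → ℝ) (hdrefl : ∀ a, d a a = 0)
    (P0 P1 : A → ℝ) (hP0 : IsPMF P0) (hP1 : IsPMF P1)
    (hP0pos : ∀ a, 0 < P0 a) (hP1pos : ∀ a, 0 < P1 a)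
    (Δ0 Δ1 : ℝ) (hΔ0 : 0 ≤ Δ0) (hΔ1 : 0 ≤ Δ1) :
    Tendsto
      (fun lam : ℝ => sInf {v | ∃ PY : A → ℝ,
        IsPMF PY ∧ Dtilde d Δ0 PY P0 ≤ lam ∧ v = Dtilde d Δ1 PY P1})
      (nhdsWithin 0 (Set.Ioi 0))
      (nhds (sInf {v | ∃ PY : A → ℝ,
        IsPMF PY ∧ Dtilde d Δ0 PY P0 ≤ 0 ∧ v = Dtilde d Δ1 PY P1})) ∧
    sInf {v | ∃ PY : A → ℝ,
        IsPMF PY ∧ Dtilde d Δ0 PY P0 ≤ 0 ∧ v = Dtilde d Δ1 PY P1}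
      = sInf {v | ∃ Q : A × A → ℝ,
        IsPMF Q ∧ margX Q = P0 ∧ expDist d Q ≤ Δ0 ∧ v = Dtilde d Δ1 (margY Q) P1} := by
  have himage : ∀ lam : ℝ, {v | ∃ PY : A → ℝ,
      IsPMF PY ∧ Dtilde d Δ0 PY P0 ≤ lam ∧ v = Dtilde d Δ1 PY P1}
        = (Dtilde d Δ1 · P1) '' {PY | IsPMF PY ∧ Dtilde d Δ0 PY P0 ≤ lam} := by
    intro lam
    ext v
    simp only [Set.mem_ofPred_eq, Set.mem_image, and_assoc, eq_comm]
  simp only [himage]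
  refine ⟨tendsto_sInf_image_sublevel isCompact_setOf_isPMF
    (isClosed_setOf_Dtilde_le hdrefl hΔ0 hP0 hP0pos)
    (isClosed_setOf_Dtilde_le hdrefl hΔ1 hP1 hP1pos)
    ⟨0, Set.forall_mem_image.2 fun _ _ => Dtilde_nonneg hP1 hP1pos⟩
    ⟨P0, hP0, (Dtilde_self hdrefl hΔ0 hP0 hP0pos).le⟩, ?_⟩
  rw [setOf_Dtilde_le_eq_image hdrefl hΔ0 hP0 hP0pos, Set.image_image]
  congr 1
  ext v
  simp only [Set.mem_image, Set.mem_ofPred_eq]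
  refine exists_congr fun Q => ⟨?_, ?_⟩
  · rintro ⟨⟨hQ, hE, hkl⟩, rfl⟩
    exact ⟨hQ, (klDiv_nonpos_iff (isPMF_margX hQ) hP0 hP0pos).1 hkl, hE, rfl⟩
  · rintro ⟨hQ, hX, hE, rfl⟩
    exact ⟨⟨hQ, hE, (klDiv_nonpos_iff (isPMF_margX hQ) hP0 hP0pos).2 hX⟩, rfl⟩

/-- Theorem 8: best achievable false-negative exponent in the
Neyman–Pearson setting. -/
theorem best_np_fn_exponent
    {A : Type} [Fintype A] [Nonempty A]
    (d : A → A → ℝ) (hd : ∀ a b, 0 ≤ d a b) (hdrefl : ∀ a, d a a = 0)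
    (P0 P1 : A → ℝ) (hP0 : IsPMF P0) (hP1 : IsPMF P1)
    (hP0pos : ∀ a, 0 < P0 a) (hP1pos : ∀ a, 0 < P1 a)
    (Δ0 Δ1 : ℝ) (hΔ0 : 0 ≤ Δ0) (hΔ1 : 0 ≤ Δ1) :
    Tendsto
      (fun lam : ℝ => sInf {v | ∃ PY : A → ℝ,
        IsPMF PY ∧ Dtilde d Δ0 PY P0 ≤ lam ∧ v = Dtilde d Δ1 PY P1})
      (nhdsWithin 0 (Set.Ioi 0))
      (nhds (sInf {v | ∃ PY : A → ℝ,
        IsPMF PY ∧ Dtilde d Δ0 PY P0 ≤ 0 ∧ v = Dtilde d Δ1 PY P1})) ∧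
    sInf {v | ∃ PY : A → ℝ,
        IsPMF PY ∧ Dtilde d Δ0 PY P0 ≤ 0 ∧ v = Dtilde d Δ1 PY P1}
      = sInf {v | ∃ Q : A × A → ℝ,
        IsPMF Q ∧ margX Q = P0 ∧ expDist d Q ≤ Δ0 ∧ v = Dtilde d Δ1 (margY Q) P1} :=
  best_np_fn_exponent_general d hdrefl P0 P1 hP0 hP1 hP0pos hP1pos Δ0 Δ1 hΔ0 hΔ1
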